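/- arXiv:2502.19205 — 4 statements merged into one kernel-verified Lean document; each statement's English description precedes it below -/
import Mathlib

section
/- Let γ ∈ ℕ, let φ ≥ 0 be a real number, let G be a finite simple locally γ-sparse graph, and let u be a vertex of G. Suppose that for every v ∈ L_1(u) a subset S_v ⊆ N(v) is given with |S_v| ≥ deg(v)/(1+φ). Then the set {u} ∪ L_1(u) ∪ ⋃_{v ∈ L_1(u)} (S_v ∩ L_2(u)) has cardinality at least |B_2(u)| / ((1+φ)(γ+1)). -/
/-- The set of vertices at graph distance exactly `h` from `u`. -/
def graphSphere {V : Type*} (G : SimpleGraph V) (u : V) (h : ℕ) : Set V :=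
  {v | G.Reachable u v ∧ G.dist u v = h}

/-- The set of vertices at graph distance at most `h` from `u`. -/
def graphBall {V : Type*} (G : SimpleGraph V) (u : V) (h : ℕ) : Set V :=
  {v | G.Reachable u v ∧ G.dist u v ≤ h}

/-- A graph is locally `γ`-sparse if for every vertex `u`:
(i) every `v ∈ L_1(u)` has degree at most `γ` in the subgraph induced by `L_1(u)`, and
(ii) every `w ∈ L_2(u)` has degree at most `γ + 1` in the subgraph induced by `L_1(u) ∪ {w}`. -/
def LocallySparse {V : Type*} (G : SimpleGraph V) (γ : ℕ) : Prop :=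
  ∀ u : V,
    (∀ v ∈ graphSphere G u 1, (G.neighborSet v ∩ graphSphere G u 1).ncard ≤ γ) ∧
    (∀ w ∈ graphSphere G u 2, (G.neighborSet w ∩ graphSphere G u 1).ncard ≤ γ + 1)

/-!
Write `L₁, L₂` for the spheres around `u` and `W = ⋃_{v ∈ L₁} (S_v ∩ L₂)`. Every vertex of `L₂`
has a neighbour in `L₁`, and each `v ∈ L₁` is also adjacent to `u`, so
`|L₁| + |L₂| ≤ ∑_{v ∈ L₁} deg v ≤ (1 + φ) ∑_{v ∈ L₁} |S_v|`. Since `N(v) ⊆ {u} ∪ L₁ ∪ L₂`,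
sparsity (i) gives `|S_v| ≤ |S_v ∩ L₂| + γ + 1`, and by sparsity (ii) a vertex of `L₂` lies in at
most `γ + 1` of the sets `S_v`, so double counting gives `∑_v |S_v ∩ L₂| ≤ (γ + 1) |W|`. Hence
`|L₁| + |L₂| ≤ (1 + φ)(γ + 1)(|L₁| + |W|)`, and adding `u` to both sides costs nothing because
`(1 + φ)(γ + 1) ≥ 1`.
-/

open Finset SimpleGraph

theorem Finset.sum_ncard_le_mul_ncard_biUnion {ι α : Type*} [Finite α] (t : Finset ι)
    (s : ι → Set α) {n : ℕ} (h : ∀ a ∈ ⋃ i ∈ t, s i, {i | i ∈ t ∧ a ∈ s i}.ncard ≤ n) :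
    ∑ i ∈ t, (s i).ncard ≤ n * (⋃ i ∈ t, s i).ncard := by
  classical
  have := Fintype.ofFinite α
  set U := (⋃ i ∈ t, s i).toFinset
  let r : ι → α → Prop := fun i a ↦ a ∈ s i
  have habove : ∀ i ∈ t, (s i).ncard = #(U.bipartiteAbove r i) := by
    intro i hi
    rw [Set.ncard_eq_toFinset_card']
    congr 1
    ext a
    simp only [Set.mem_toFinset, bipartiteAbove, mem_filter, U, r]
    exact ⟨fun ha ↦ ⟨Set.mem_biUnion hi ha, ha⟩, And.right⟩
  have hbelow : ∀ a ∈ U, #(t.bipartiteBelow r a) ≤ n := by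
    intro a ha
    rw [← Set.ncard_coe_finset]
    simpa [bipartiteBelow, r] using h a (Set.mem_toFinset.mp ha)
  calc ∑ i ∈ t, (s i).ncard = ∑ i ∈ t, #(U.bipartiteAbove r i) := sum_congr rfl habove
    _ = ∑ a ∈ U, #(t.bipartiteBelow r a) := sum_card_bipartiteAbove_eq_sum_card_bipartiteBelow r
    _ ≤ #U • n := sum_le_card_nsmul _ _ _ hbelow
    _ = n * (⋃ i ∈ t, s i).ncard := by rw [smul_eq_mul, mul_comm, Set.ncard_eq_toFinset_card']

section Spheres

variable {V : Type*} {G : SimpleGraph V} {u v w : V} {h k : ℕ}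

theorem graphSphere_one : graphSphere G u 1 = G.neighborSet u := by
  ext v
  exact ⟨fun hv ↦ dist_eq_one_iff_adj.mp hv.2,
    fun huv ↦ ⟨huv.reachable, dist_eq_one_iff_adj.mpr huv⟩⟩

theorem graphBall_zero : graphBall G u 0 = {u} := by
  ext v
  simp only [graphBall, Set.mem_ofPred_eq, Nat.le_zero, Set.mem_singleton_iff]
  exact ⟨fun ⟨hr, hd⟩ ↦ (hr.dist_eq_zero_iff.mp hd).symm, fun hv ↦ hv ▸ ⟨.rfl, dist_self⟩⟩

theorem graphBall_succ : graphBall G u (h + 1) = graphBall G u h ∪ graphSphere G u (h + 1) := by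
  ext v
  simp only [graphBall, graphSphere, Set.mem_union, Set.mem_ofPred_eq, Nat.le_succ_iff, and_or_left]

theorem disjoint_graphBall_graphSphere (hhk : h < k) :
    Disjoint (graphBall G u h) (graphSphere G u k) :=
  Set.disjoint_left.mpr fun _ hv hv' ↦ by have := hv.2; have := hv'.2; omega

theorem neighborSet_subset_graphBall_succ (hv : v ∈ graphBall G u h) :
    G.neighborSet v ⊆ graphBall G u (h + 1) := fun x hvx ↦
  ⟨hv.1.trans (Adj.reachable hvx), by
    have := (Adj.reachable hvx).dist_triangle_right u
    rw [dist_eq_one_iff_adj.mpr hvx] at this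
    have := hv.2
    omega⟩

theorem exists_adj_adj_of_mem_graphSphere_two (hw : w ∈ graphSphere G u 2) :
    ∃ v, G.Adj u v ∧ G.Adj v w := by
  have : G.edist u w = 2 := by rw [← hw.1.coe_dist_eq_edist, hw.2]; rfl
  obtain ⟨v, hv⟩ := (edist_eq_two_iff.mp this).2.2
  rw [mem_commonNeighbors] at hv
  exact ⟨v, hv.1, hv.2.symm⟩

theorem graphBall_one : graphBall G u 1 = {u} ∪ graphSphere G u 1 := by
  rw [← graphBall_zero]
  exact graphBall_succ

section Counting

variable [Finite V]

theorem ncard_graphBall_succ :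
    (graphBall G u (h + 1)).ncard = (graphBall G u h).ncard + (graphSphere G u (h + 1)).ncard := by
  rw [graphBall_succ, Set.ncard_union_eq (disjoint_graphBall_graphSphere h.lt_succ_self)]

theorem ncard_graphSphere_two_le_sum [Fintype (G.neighborSet u)] :
    (graphSphere G u 2).ncard ≤
      ∑ v ∈ G.neighborFinset u, (G.neighborSet v ∩ graphSphere G u 2).ncard := by
  refine (Set.ncard_le_ncard fun w hw ↦ ?_).trans (set_ncard_biUnion_le _ _)
  obtain ⟨v, huv, hvw⟩ := exists_adj_adj_of_mem_graphSphere_two hw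
  exact Set.mem_iUnion₂_of_mem ((G.mem_neighborFinset u v).mpr huv) ⟨hvw, hw⟩

theorem one_add_ncard_neighborSet_inter_graphSphere_two_le (huv : G.Adj u v) :
    1 + (G.neighborSet v ∩ graphSphere G u 2).ncard ≤ (G.neighborSet v).ncard := by
  have hu : u ∉ G.neighborSet v ∩ graphSphere G u 2 := fun hu ↦
    Set.disjoint_left.mp (disjoint_graphBall_graphSphere two_pos) (graphBall_zero ▸ rfl) hu.2
  rw [add_comm, ← Set.ncard_insert_of_notMem hu]
  exact Set.ncard_le_ncard (Set.insert_subset huv.symm Set.inter_subset_left)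

theorem ncard_le_ncard_inter_graphSphere_two_add {S : Set V} {γ : ℕ} (huv : G.Adj u v)
    (hS : S ⊆ G.neighborSet v) (hγ : (G.neighborSet v ∩ graphSphere G u 1).ncard ≤ γ) :
    S.ncard ≤ (S ∩ graphSphere G u 2).ncard + (γ + 1) := by
  have hv : v ∈ graphBall G u 1 := graphBall_one ▸ Or.inr (graphSphere_one ▸ huv)
  have hsub : S ⊆ (S ∩ graphSphere G u 2) ∪ insert u (G.neighborSet v ∩ graphSphere G u 1) := by
    intro x hx
    have hx' := neighborSet_subset_graphBall_succ hv (hS hx)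
    rw [graphBall_succ, graphBall_one] at hx'
    rcases hx' with (hxu | hx1) | hx2
    · exact Or.inr (Or.inl hxu)
    · exact Or.inr (Or.inr ⟨hS hx, hx1⟩)
    · exact Or.inl ⟨hx, hx2⟩
  calc S.ncard ≤ _ := Set.ncard_le_ncard hsub
    _ ≤ _ := Set.ncard_union_le _ _
    _ ≤ _ := by have := Set.ncard_insert_le u (G.neighborSet v ∩ graphSphere G u 1); omega

theorem sum_ncard_inter_graphSphere_two_le [Fintype (G.neighborSet u)] {S : V → Set V} {γ : ℕ}
    (hS : ∀ v, G.Adj u v → S v ⊆ G.neighborSet v)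
    (hγ : ∀ w ∈ graphSphere G u 2, (G.neighborSet w ∩ graphSphere G u 1).ncard ≤ γ + 1) :
    ∑ v ∈ G.neighborFinset u, (S v ∩ graphSphere G u 2).ncard ≤
      (γ + 1) * (⋃ v ∈ G.neighborFinset u, S v ∩ graphSphere G u 2).ncard := by
  refine sum_ncard_le_mul_ncard_biUnion _ _ fun w hw ↦ ?_
  obtain ⟨-, -, -, hw2⟩ := Set.mem_iUnion₂.mp hw
  refine (Set.ncard_le_ncard fun v hv ↦ ?_).trans (hγ w hw2)
  obtain ⟨hv, hwv, -⟩ := hv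
  have huv := (G.mem_neighborFinset u v).mp hv
  exact ⟨(hS v huv hwv).symm, graphSphere_one ▸ huv⟩

theorem ncard_graphSphere_one_add_ncard_graphSphere_two_le {S : V → Set V} {γ : ℕ} {c : ℝ}
    (hc : 0 ≤ c) (hG : LocallySparse G γ) (hS : ∀ v ∈ graphSphere G u 1, S v ⊆ G.neighborSet v)
    (hdeg : ∀ v ∈ graphSphere G u 1, ((G.neighborSet v).ncard : ℝ) ≤ c * (S v).ncard) :
    ((graphSphere G u 1).ncard + (graphSphere G u 2).ncard : ℝ) ≤
      c * (γ + 1) * ((graphSphere G u 1).ncard +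
        (⋃ v ∈ graphSphere G u 1, S v ∩ graphSphere G u 2).ncard) := by
  have := Fintype.ofFinite (G.neighborSet u)
  set t := G.neighborFinset u
  have ht : ↑t = graphSphere G u 1 := by rw [coe_neighborFinset, graphSphere_one]
  have hadj : ∀ v ∈ t, G.Adj u v := fun v hv ↦ (G.mem_neighborFinset u v).mp hv
  rw [← ht] at hS hdeg ⊢
  rw [Set.ncard_coe_finset, set_biUnion_coe]
  have hcount := sum_ncard_inter_graphSphere_two_le
    (fun v huv ↦ hS v ((G.mem_neighborFinset u v).mpr huv)) (hG u).2
  calc (#t + (graphSphere G u 2).ncard : ℝ)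
      ≤ ∑ v ∈ t, (1 + (G.neighborSet v ∩ graphSphere G u 2).ncard : ℝ) := by
        rw [sum_add_distrib, sum_const, nsmul_one]
        gcongr
        exact_mod_cast ncard_graphSphere_two_le_sum (G := G) (u := u)
    _ ≤ ∑ v ∈ t, ((G.neighborSet v).ncard : ℝ) := sum_le_sum fun v hv ↦ by
        exact_mod_cast one_add_ncard_neighborSet_inter_graphSphere_two_le (hadj v hv)
    _ ≤ ∑ v ∈ t, c * (S v).ncard := sum_le_sum hdeg
    _ ≤ ∑ v ∈ t, c * ((S v ∩ graphSphere G u 2).ncard + (γ + 1)) := sum_le_sum fun v hv ↦ by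
        gcongr
        exact_mod_cast ncard_le_ncard_inter_graphSphere_two_add (hadj v hv) (hS v hv)
          ((hG u).1 v (ht ▸ hv))
    _ = c * (∑ v ∈ t, ((S v ∩ graphSphere G u 2).ncard : ℝ) + #t * (γ + 1)) := by
        rw [← mul_sum, sum_add_distrib, sum_const, nsmul_eq_mul]
    _ ≤ c * ((γ + 1) * (⋃ v ∈ t, S v ∩ graphSphere G u 2).ncard + #t * (γ + 1)) := by
        gcongr
        exact_mod_cast hcount
    _ = _ := by ring

end Counting

end Spheres

/-- In a locally `γ`-sparse graph, if for each `v ∈ L_1(u)` a subset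
`S v ⊆ N(v)` with `|S v| ≥ deg(v)/(1+φ)` is given, then the set
`{u} ∪ L_1(u) ∪ ⋃_{v ∈ L_1(u)} (S v ∩ L_2(u))` has cardinality at least
`|B_2(u)| / ((1+φ)(γ+1))`. -/
theorem stmt_4 {V : Type*} [Fintype V] (G : SimpleGraph V) (γ : ℕ) (φ : ℝ) (hφ : 0 ≤ φ)
    (hG : LocallySparse G γ) (u : V) (S : V → Set V)
    (hS : ∀ v ∈ graphSphere G u 1, S v ⊆ G.neighborSet v)
    (hcard : ∀ v ∈ graphSphere G u 1,
      ((G.neighborSet v).ncard : ℝ) / (1 + φ) ≤ ((S v).ncard : ℝ)) :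
    ((graphBall G u 2).ncard : ℝ) / ((1 + φ) * (γ + 1))
      ≤ ((({u} : Set V) ∪ graphSphere G u 1 ∪
            ⋃ v ∈ graphSphere G u 1, (S v ∩ graphSphere G u 2)).ncard : ℝ) := by
  set W := ⋃ v ∈ graphSphere G u 1, (S v ∩ graphSphere G u 2)
  have hφ1 : 0 < 1 + φ := by linarith
  have hdeg : ∀ v ∈ graphSphere G u 1, ((G.neighborSet v).ncard : ℝ) ≤ (1 + φ) * (S v).ncard :=
    fun v hv ↦ by linarith [(div_le_iff₀ hφ1).mp (hcard v hv)]
  have hmain := ncard_graphSphere_one_add_ncard_graphSphere_two_le hφ1.le hG hS hdeg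
  have hW : Disjoint (graphBall G u 1) W :=
    (disjoint_graphBall_graphSphere one_lt_two).mono_right
      (Set.iUnion₂_subset fun _ _ ↦ Set.inter_subset_right)
  have hball1 : (graphBall G u 1).ncard = 1 + (graphSphere G u 1).ncard := by
    rw [ncard_graphBall_succ (h := 0), graphBall_zero, Set.ncard_singleton]
  rw [ncard_graphBall_succ (h := 1), ← graphBall_one, Set.ncard_union_eq hW, hball1,
    div_le_iff₀ (by positivity)]
  push_cast
  have hK : 1 ≤ (1 + φ) * (γ + 1) := by nlinarith [(Nat.cast_nonneg γ : (0 : ℝ) ≤ γ)]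
  nlinarith
end

section
/- Let 0 ≤ ε < 1/2, let A and B be finite sets with A ∪ B nonempty, and let Â ⊆ A and B̂ ⊆ B satisfy |Â| ≥ (1−ε)|A| and |B̂| ≥ (1−ε)|B|. Then (1−ε)·J(A,B) − ε ≤ J(Â,B̂) ≤ J(A,B)/(1−2ε). -/
/-- The Jaccard similarity of two finite sets. -/
noncomputable def jaccard {α : Type*} [DecidableEq α] (A B : Finset α) : ℝ :=
  ((A ∩ B).card : ℝ) / ((A ∪ B).card : ℝ)

/-- If `0 ≤ ε < 1/2`, `A ∪ B` is nonempty, `Â ⊆ A`, `B̂ ⊆ B`,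
`|Â| ≥ (1−ε)|A|` and `|B̂| ≥ (1−ε)|B|`, then
`(1−ε)·J(A,B) − ε ≤ J(Â,B̂) ≤ J(A,B)/(1−2ε)`. -/
theorem stmt_5 {α : Type*} [DecidableEq α] (ε : ℝ) (hε0 : 0 ≤ ε) (hε : ε < 1 / 2)
    (A B Ahat Bhat : Finset α) (hne : (A ∪ B).Nonempty)
    (hA : Ahat ⊆ A) (hB : Bhat ⊆ B)
    (hAc : (1 - ε) * (A.card : ℝ) ≤ (Ahat.card : ℝ))
    (hBc : (1 - ε) * (B.card : ℝ) ≤ (Bhat.card : ℝ)) :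
    (1 - ε) * jaccard A B - ε ≤ jaccard Ahat Bhat ∧
      jaccard Ahat Bhat ≤ jaccard A B / (1 - 2 * ε) := by
  classical
  have hu : (0:ℝ) < ((A ∪ B).card : ℝ) := by exact_mod_cast Finset.card_pos.mpr hne
  have hε2 : (0:ℝ) < 1 - 2 * ε := by linarith
  have hAhat : ((A \ Ahat).card : ℝ) ≤ ε * A.card := by
    rw [Finset.card_sdiff_of_subset hA, Nat.cast_sub (Finset.card_le_card hA)]
    linarith
  have hBhat : ((B \ Bhat).card : ℝ) ≤ ε * B.card := by
    rw [Finset.card_sdiff_of_subset hB, Nat.cast_sub (Finset.card_le_card hB)]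
    linarith
  have hsub1 : A ∩ B ⊆ (Ahat ∩ Bhat) ∪ ((A \ Ahat) ∪ (B \ Bhat)) := by
    intro x hx
    simp only [Finset.mem_inter, Finset.mem_union, Finset.mem_sdiff] at *
    tauto
  have hsub2 : A ∪ B ⊆ (Ahat ∪ Bhat) ∪ ((A \ Ahat) ∪ (B \ Bhat)) := by
    intro x hx
    simp only [Finset.mem_inter, Finset.mem_union, Finset.mem_sdiff] at *
    tauto
  have key : ∀ (S T : Finset α), S ⊆ T ∪ ((A \ Ahat) ∪ (B \ Bhat)) →
      (S.card : ℝ) ≤ T.card + ε * A.card + ε * B.card := by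
    intro S T hST
    have h1 := Finset.card_le_card hST
    have h2 := Finset.card_union_le T ((A \ Ahat) ∪ (B \ Bhat))
    have h3 := Finset.card_union_le (A \ Ahat) (B \ Bhat)
    have h4 : (S.card : ℝ) ≤ T.card + ((A \ Ahat).card + (B \ Bhat).card) := by
      exact_mod_cast le_trans h1 (le_trans h2 (by omega))
    linarith
  have h1 := key _ _ hsub1
  have h2 := key _ _ hsub2
  have hAu : ((A.card : ℝ)) ≤ ((A ∪ B).card : ℝ) := by
    exact_mod_cast Finset.card_le_card (Finset.subset_union_left)
  have hBu : ((B.card : ℝ)) ≤ ((A ∪ B).card : ℝ) := by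
    exact_mod_cast Finset.card_le_card (Finset.subset_union_right)
  have hsum : ((A ∪ B).card : ℝ) + ((A ∩ B).card : ℝ) = (A.card : ℝ) + B.card := by
    exact_mod_cast Finset.card_union_add_card_inter A B
  have hji : ((Ahat ∩ Bhat).card : ℝ) ≤ ((A ∩ B).card : ℝ) := by
    exact_mod_cast Finset.card_le_card (Finset.inter_subset_inter hA hB)
  have hvu : ((Ahat ∪ Bhat).card : ℝ) ≤ ((A ∪ B).card : ℝ) := by
    exact_mod_cast Finset.card_le_card (Finset.union_subset_union hA hB)
  have hiu : ((A ∩ B).card : ℝ) ≤ ((A ∪ B).card : ℝ) := by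
    exact_mod_cast Finset.card_le_card (Finset.inter_subset_union)
  have hεsum : ε * (((A ∪ B).card : ℝ) + ((A ∩ B).card : ℝ)) = ε * ((A.card : ℝ) + B.card) := by
    rw [hsum]
  have hεiu : ε * ((A ∩ B).card : ℝ) ≤ ε * ((A ∪ B).card : ℝ) :=
    mul_le_mul_of_nonneg_left hiu hε0
  have hv : (1 - 2 * ε) * ((A ∪ B).card : ℝ) ≤ ((Ahat ∪ Bhat).card : ℝ) := by
    nlinarith [h2, hεsum, hεiu]
  have hvpos : (0:ℝ) < ((Ahat ∪ Bhat).card : ℝ) :=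
    lt_of_lt_of_le (by positivity) hv
  unfold jaccard
  constructor
  · have step1 : ((Ahat ∩ Bhat).card : ℝ) / ((A ∪ B).card : ℝ) ≤
        ((Ahat ∩ Bhat).card : ℝ) / ((Ahat ∪ Bhat).card : ℝ) := by
      gcongr
    have e1 : (1 - ε) * (((A ∩ B).card : ℝ) / ((A ∪ B).card : ℝ)) - ε =
        ((1 - ε) * ((A ∩ B).card : ℝ) - ε * ((A ∪ B).card : ℝ)) / ((A ∪ B).card : ℝ) := by
      field_simp
    rw [e1]
    refine le_trans ?_ step1
    gcongr
    nlinarith [h1, hεsum]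
  · rw [div_div]
    gcongr
    linarith [hv]
end

section
/- Fix a real φ ∈ (0,1] and a natural number Δ₀. Consider the deterministic process with state (Δ, δ) ∈ ℕ × ℕ initialized at (Δ₀, 0) that evolves over n steps as follows: at each step, δ is incremented by 1; then, if δ ≥ φ·Δ, a cost of Δ + δ is incurred and the state becomes (Δ + δ, 0); otherwise no cost is incurred and the state is unchanged. Then the total cost incurred over the n steps is at most (2/φ)·n. -/
/-- The threshold-batching process: state `(Δ, δ)`; at each step `δ` is incremented by
one, and then, if `δ ≥ φ·Δ`, a cost of `Δ + δ` is incurred and the state is reset to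
`(Δ + δ, 0)`; otherwise no cost is incurred. `lazyRun φ n s` returns the final state
and the total cost incurred over `n` steps starting from state `s`. -/
noncomputable def lazyRun (φ : ℝ) : ℕ → ℕ × ℕ → (ℕ × ℕ) × ℕ
  | 0, s => (s, 0)
  | n + 1, s =>
    let δ' := s.2 + 1
    let next : (ℕ × ℕ) × ℕ :=
      if φ * (s.1 : ℝ) ≤ (δ' : ℝ) then ((s.1 + δ', 0), s.1 + δ') else ((s.1, δ'), 0)
    let rest := lazyRun φ n next.1
    (rest.1, next.2 + rest.2)

lemma lazyRun_aux (φ : ℝ) (hφ0 : 0 < φ) (hφ1 : φ ≤ 1) :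
    ∀ n Δ δ, ((lazyRun φ n (Δ, δ)).2 : ℝ) ≤ (2 / φ) * (n + δ) := by
  intro n
  induction n with
  | zero =>
      intro Δ δ
      simp [lazyRun]
      positivity
  | succ n ih =>
      intro Δ δ
      rw [lazyRun]
      simp only
      by_cases h : φ * (Δ : ℝ) ≤ ((δ + 1 : ℕ) : ℝ)
      · rw [if_pos h]
        simp only
        push_cast
        have hrest := ih (Δ + (δ + 1)) 0
        have hΔ : (Δ : ℝ) ≤ (δ + 1) / φ := by
          rw [le_div_iff₀ hφ0]
          push_cast at h
          linarith
        have hδ : ((δ : ℝ) + 1) ≤ (δ + 1) / φ := by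
          rw [le_div_iff₀ hφ0]
          nlinarith [Nat.cast_nonneg (α := ℝ) δ]
        have hcost : ((Δ + (δ + 1) : ℕ) : ℝ) ≤ (2 / φ) * (δ + 1) := by
          push_cast
          have : (2 / φ) * ((δ : ℝ) + 1) = (δ + 1) / φ + (δ + 1) / φ := by ring
          rw [this]
          linarith
        push_cast at hrest ⊢
        push_cast at hcost
        nlinarith [hcost, hrest]
      · rw [if_neg h]
        simp only
        have hrest := ih Δ (δ + 1)
        push_cast at hrest ⊢
        linarith

/-- For `φ ∈ (0,1]` and any initial `Δ₀`, the total cost incurred by the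
process over `n` steps starting from `(Δ₀, 0)` is at most `(2/φ)·n`. -/
theorem stmt_12 (φ : ℝ) (hφ0 : 0 < φ) (hφ1 : φ ≤ 1) (Δ₀ n : ℕ) :
    ((lazyRun φ n (Δ₀, 0)).2 : ℝ) ≤ (2 / φ) * n := by
  have := lazyRun_aux φ hφ0 hφ1 n Δ₀ 0
  simpa using this
end

section
/- Let Δ ≥ 1 and r ≥ 1 be integers. Let G be the finite simple graph whose vertex set is the disjoint union S₀ ⊔ S₁ ⊔ S₂ with |S₀| = |S₁| = Δ and |S₂| = Δ·r, whose edges are: all pairs {s₀, s₁} with s₀ ∈ S₀ and s₁ ∈ S₁ (a complete bipartite graph between S₀ and S₁), together with an edge {w, g(w)} for every w ∈ S₂, where g : S₂ → S₁ is a function all of whose fibers have cardinality exactly r. Then for every u ∈ S₀, the 2-ball of u is the entire vertex set, so |B₂(u)| = 2Δ + Δ·r. Moreover, for every real ρ ≥ 1 with r = ρ² an integer and every subset Â ⊆ B₂(u) with |Â| ≥ |B₂(u)|/ρ, one has |Â ∩ S₂| ≥ Δ·ρ + 2Δ/ρ − 2Δ. -/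
/-- the lower-bound construction. Let `G` be the graph on
`S₀ ⊔ S₁ ⊔ S₂` with `|S₀| = |S₁| = Δ`, `|S₂| = Δ·r`, a complete bipartite graph between
`S₀` and `S₁`, plus an edge `{w, g w}` for every `w ∈ S₂`, where `g : S₂ → S₁` has all
fibers of size exactly `r`. Then for `u ∈ S₀` the 2-ball of `u` is the whole vertex set,
so `|B₂(u)| = 2Δ + Δ·r`; and for every real `ρ ≥ 1` with `r = ρ²` and every
`Ahat ⊆ B₂(u)` with `|Ahat| ≥ |B₂(u)|/ρ`, one has `|Ahat ∩ S₂| ≥ Δρ + 2Δ/ρ − 2Δ`. -/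
theorem stmt_14 {V : Type*} [Fintype V] [DecidableEq V]
    (Δ r : ℕ) (hΔ : 1 ≤ Δ) (hr : 1 ≤ r)
    (S0 S1 S2 : Finset V)
    (hd01 : Disjoint S0 S1) (hd02 : Disjoint S0 S2) (hd12 : Disjoint S1 S2)
    (hcover : S0 ∪ S1 ∪ S2 = Finset.univ)
    (hc0 : S0.card = Δ) (hc1 : S1.card = Δ) (hc2 : S2.card = Δ * r)
    (g : V → V) (hg : ∀ w ∈ S2, g w ∈ S1)
    (hfib : ∀ s ∈ S1, (S2.filter fun w => g w = s).card = r)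
    (G : SimpleGraph V)
    (hAdj : ∀ a b : V, G.Adj a b ↔
      ((a ∈ S0 ∧ b ∈ S1) ∨ (b ∈ S0 ∧ a ∈ S1) ∨
       (a ∈ S2 ∧ b = g a) ∨ (b ∈ S2 ∧ a = g b)))
    (u : V) (hu : u ∈ S0) :
    graphBall G u 2 = Set.univ ∧
    (graphBall G u 2).ncard = 2 * Δ + Δ * r ∧
    ∀ ρ : ℝ, 1 ≤ ρ → (r : ℝ) = ρ ^ 2 →
      ∀ Ahat : Set V, Ahat ⊆ graphBall G u 2 →
        ((graphBall G u 2).ncard : ℝ) / ρ ≤ (Ahat.ncard : ℝ) →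
        (Δ : ℝ) * ρ + 2 * (Δ : ℝ) / ρ - 2 * (Δ : ℝ) ≤ ((Ahat ∩ (S2 : Set V)).ncard : ℝ) := by
  have hWalk : ∀ v : V, ∃ p : G.Walk u v, p.length ≤ 2 := by
    intro v
    have hv : v ∈ S0 ∪ S1 ∪ S2 := by rw [hcover]; exact Finset.mem_univ v
    simp only [Finset.mem_union] at hv
    rcases hv with (hv | hv) | hv
    · obtain ⟨s, hs⟩ := Finset.card_pos.mp (by omega : 0 < S1.card)
      have h1 : G.Adj u s := (hAdj u s).mpr (Or.inl ⟨hu, hs⟩)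
      have h2 : G.Adj s v := (hAdj s v).mpr (Or.inr (Or.inl ⟨hv, hs⟩))
      exact ⟨SimpleGraph.Walk.cons h1 (SimpleGraph.Walk.cons h2 SimpleGraph.Walk.nil), by simp⟩
    · have h1 : G.Adj u v := (hAdj u v).mpr (Or.inl ⟨hu, hv⟩)
      exact ⟨SimpleGraph.Walk.cons h1 SimpleGraph.Walk.nil, by simp⟩
    · have h1 : G.Adj u (g v) := (hAdj u (g v)).mpr (Or.inl ⟨hu, hg v hv⟩)
      have h2 : G.Adj (g v) v := (hAdj (g v) v).mpr (Or.inr (Or.inr (Or.inr ⟨hv, rfl⟩)))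
      exact ⟨SimpleGraph.Walk.cons h1 (SimpleGraph.Walk.cons h2 SimpleGraph.Walk.nil), by simp⟩
  have hball : graphBall G u 2 = Set.univ := by
    ext v
    simp only [graphBall, Set.mem_setOf_eq, Set.mem_univ, iff_true]
    obtain ⟨p, hp⟩ := hWalk v
    exact ⟨⟨p⟩, le_trans (SimpleGraph.dist_le p) hp⟩
  have hcardV : Fintype.card V = 2 * Δ + Δ * r := by
    rw [← Finset.card_univ, ← hcover,
      Finset.card_union_of_disjoint (Finset.disjoint_union_left.mpr ⟨hd02, hd12⟩),
      Finset.card_union_of_disjoint hd01, hc0, hc1, hc2]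
    ring
  have hncard : (graphBall G u 2).ncard = 2 * Δ + Δ * r := by
    rw [hball, Set.ncard_univ, Nat.card_eq_fintype_card, hcardV]
  refine ⟨hball, hncard, ?_⟩
  intro ρ hρ hrρ Ahat hsub hge
  have hρ0 : 0 < ρ := lt_of_lt_of_le one_pos hρ
  have hsplit : Ahat.ncard ≤ (Ahat ∩ (S2 : Set V)).ncard + 2 * Δ := by
    have h2 : (Ahat \ (S2 : Set V)).ncard ≤ 2 * Δ := by
      have hsub2 : Ahat \ (S2 : Set V) ⊆ ((S0 ∪ S1 : Finset V) : Set V) := by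
        intro x hx
        have hxm : x ∈ S0 ∪ S1 ∪ S2 := by rw [hcover]; exact Finset.mem_univ x
        simp only [Finset.coe_union, Set.mem_union, Finset.mem_coe,
          Set.mem_diff, Finset.mem_union] at hxm hx ⊢
        tauto
      calc (Ahat \ (S2 : Set V)).ncard
          ≤ ((S0 ∪ S1 : Finset V) : Set V).ncard :=
            Set.ncard_le_ncard hsub2 (Set.toFinite _)
        _ = 2 * Δ := by
            rw [Set.ncard_coe_finset, Finset.card_union_of_disjoint hd01, hc0, hc1]; ring
    calc Ahat.ncard = ((Ahat ∩ (S2 : Set V)) ∪ (Ahat \ (S2 : Set V))).ncard := by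
          rw [Set.inter_union_diff]
      _ ≤ (Ahat ∩ (S2 : Set V)).ncard + (Ahat \ (S2 : Set V)).ncard :=
          Set.ncard_union_le _ _
      _ ≤ (Ahat ∩ (S2 : Set V)).ncard + 2 * Δ := by omega
  have hge' : (2 * (Δ : ℝ) + (Δ : ℝ) * (r : ℝ)) / ρ ≤ (Ahat.ncard : ℝ) := by
    rw [hncard] at hge
    push_cast at hge ⊢
    linarith
  have hsplit' : (Ahat.ncard : ℝ) ≤ ((Ahat ∩ (S2 : Set V)).ncard : ℝ) + 2 * (Δ : ℝ) := by
    exact_mod_cast hsplit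
  rw [hrρ] at hge'
  have hkey : (2 * (Δ : ℝ) + (Δ : ℝ) * ρ ^ 2) / ρ = (Δ : ℝ) * ρ + 2 * (Δ : ℝ) / ρ := by
    field_simp
    ring
  linarith [hkey ▸ hge']
end
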